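/- In any algebra (S,*,') satisfying the three axioms, the identity x''' * x = x''' * x'' holds for all x in S. -/

import Mathlib

/-! Writing `x'` for `i x` and `*` for `m`: axioms (E1) and (E3) alone give
`p * z'' = ((p * z'') * z') * z` for all `p`, `z` (expand `z''` by (E1) and move the brackets by
(E3)), and taking `p = z'' * z'''` yields `z'' = (z'' * z') * z`. With `a = x'''`, the first identity
at `p = a`, `z = x` and the second at `z = x'` turn both `a * x''` and `a * x` into
`((a * x'') * x') * x`. -/

section

variable {S : Type*} {m : S → S → S} {i : S → S}

theorem mul_inv_inv_eq_mul_mul_inv_mul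
    (E1 : ∀ x, m (m x (i x)) x = x) (E3 : ∀ x y z, m (m x y) z = m x (m y (i (i z))))
    (p z : S) : m p (i (i z)) = m (m (m p (i (i z))) (i z)) z :=
  calc m p (i (i z))
      = m p (m (m (i (i z)) (i (i (i z)))) (i (i z))) := by rw [E1]
    _ = m (m p (m (i (i z)) (i (i (i z))))) z := (E3 _ _ z).symm
    _ = m (m (m p (i (i z))) (i z)) z := by rw [E3 p (i (i z)) (i z)]

theorem inv_inv_eq_mul_inv_mul
    (E1 : ∀ x, m (m x (i x)) x = x) (E3 : ∀ x y z, m (m x y) z = m x (m y (i (i z))))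
    (z : S) : i (i z) = m (m (i (i z)) (i z)) z := by
  simpa only [E1] using mul_inv_inv_eq_mul_mul_inv_mul E1 E3 (m (i (i z)) (i (i (i z)))) z

end

theorem stmt_general (S : Type*) (m : S → S → S) (i : S → S)
    (E1 : ∀ x, m (m x (i x)) x = x)
    (E3 : ∀ x y z, m (m x y) z = m x (m y (i (i z)))) :
    ∀ x, m (i (i (i x))) x = m (i (i (i x))) (i (i x)) := fun x =>
  (congrArg (m · x) (inv_inv_eq_mul_inv_mul E1 E3 (i x))).trans
    (mul_inv_inv_eq_mul_mul_inv_mul E1 E3 _ x).symm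

theorem stmt (S : Type*) (m : S → S → S) (i : S → S)
    (E1 : ∀ x, m (m x (i x)) x = x)
    (E2 : ∀ x y, m (m x (i x)) (m (i y) y) = m (m (i y) y) (m x (i x)))
    (E3 : ∀ x y z, m (m x y) z = m x (m y (i (i z)))) :
    ∀ x, m (i (i (i x))) x = m (i (i (i x))) (i (i x)) :=
  stmt_general S m i E1 E3
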